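/- Suppose φ is an efficient, strategy-proof, non-bossy, and normalized-cone-continuous rule on three agents and three objects A = {a,b,c}. Let u be a profile where distinct agents i and j have the same induced strict order, with u_i(a) > u_i(b) > u_i(c), and let π = φ(u). If π(i,b) + π(j,b) > 0, then both π_i and π_j lie in [a,b] ∪ [b,c]. -/
import Mathlib


open Finset Filter Topology

/-- No ties on degenerate lotteries. -/
def NoTies (u : Fin 3 → ℝ) : Prop := ∀ x y : Fin 3, x ≠ y → u x ≠ u y

/-- A lottery over three objects. -/
def IsLottery (π : Fin 3 → ℝ) : Prop := (∀ x, 0 ≤ π x) ∧ ∑ x, π x = 1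

/-- A 3×3 bistochastic matrix (rows = agents, columns = objects). -/
def Bistochastic (π : Fin 3 → Fin 3 → ℝ) : Prop :=
  (∀ i x, 0 ≤ π i x) ∧ (∀ i, ∑ x, π i x = 1) ∧ (∀ x, ∑ i, π i x = 1)

/-- Expected utility of lottery `π` under Bernoulli utility `u`. -/
def EU (u π : Fin 3 → ℝ) : ℝ := ∑ x, u x * π x

/-- `u` and `v` induce the same strict order on objects. -/
def SameOrder (u v : Fin 3 → ℝ) : Prop := ∀ x y : Fin 3, u x > u y ↔ v x > v y

def NoTiesProfile (u : Fin 3 → Fin 3 → ℝ) : Prop := ∀ i, NoTies (u i)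

/-- Utilities normalized to sum to one. -/
def Normalized (u : Fin 3 → ℝ) : Prop := ∑ x, u x = 1

/-- Rate of middle substitution, for `u a > u b > u c`. -/
noncomputable def mu (u : Fin 3 → ℝ) (a b c : Fin 3) : ℝ := (u b - u c) / (u a - u c)

/-- Effectively the same: same strict order and same rate of middle substitution. -/
def EffSame (u v : Fin 3 → ℝ) : Prop :=
  SameOrder u v ∧ ∀ a b c : Fin 3, u a > u b → u b > u c → mu u a b c = mu v a b c

/-- The rule maps (no-ties) profiles to bistochastic matrices. -/
def BistochasticValued (φ : (Fin 3 → Fin 3 → ℝ) → Fin 3 → Fin 3 → ℝ) : Prop :=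
  ∀ u, NoTiesProfile u → Bistochastic (φ u)

def StrategyProof (φ : (Fin 3 → Fin 3 → ℝ) → Fin 3 → Fin 3 → ℝ) : Prop :=
  ∀ u i ui', NoTiesProfile u → NoTies ui' →
    EU (u i) (φ u i) ≥ EU (u i) (φ (Function.update u i ui') i)

def NonBossy (φ : (Fin 3 → Fin 3 → ℝ) → Fin 3 → Fin 3 → ℝ) : Prop :=
  ∀ u i ui', NoTiesProfile u → NoTies ui' →
    φ u i = φ (Function.update u i ui') i → φ u = φ (Function.update u i ui')

/-- `π'` Pareto-dominates `π` at `u` in expected utility. -/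
def Dominates (u π' π : Fin 3 → Fin 3 → ℝ) : Prop :=
  (∀ j, EU (u j) (π' j) ≥ EU (u j) (π j)) ∧ ∃ i, EU (u i) (π' i) > EU (u i) (π i)

def Efficient (φ : (Fin 3 → Fin 3 → ℝ) → Fin 3 → Fin 3 → ℝ) : Prop :=
  ∀ u, NoTiesProfile u → ¬ ∃ π', Bistochastic π' ∧ Dominates u π' (φ u)

/-- Normalized-cone-continuity. -/
def NCContinuous (φ : (Fin 3 → Fin 3 → ℝ) → Fin 3 → Fin 3 → ℝ) : Prop :=
  ∀ (u : Fin 3 → Fin 3 → ℝ) (i : Fin 3) (us : ℕ → Fin 3 → ℝ),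
    NoTiesProfile u → Normalized (u i) →
    (∀ k, NoTies (us k) ∧ Normalized (us k)) →
    Tendsto us atTop (nhds (u i)) →
    Tendsto (fun k => φ (Function.update u i (us k))) atTop (nhds (φ u))

section Infra

lemma univ3 {a b c : Fin 3} (hab : a ≠ b) (hac : a ≠ c) (hbc : b ≠ c) :
    (Finset.univ : Finset (Fin 3)) = {a, b, c} := by
  symm
  apply Finset.eq_univ_of_card
  rw [Finset.card_insert_of_notMem (by simp [hab, hac]),
    Finset.card_insert_of_notMem (by simp [hbc]), Finset.card_singleton]
  rfl

lemma sum3 {a b c : Fin 3} (hab : a ≠ b) (hac : a ≠ c) (hbc : b ≠ c) (f : Fin 3 → ℝ) :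
    ∑ x, f x = f a + f b + f c := by
  rw [univ3 hab hac hbc, Finset.sum_insert (by simp [hab, hac]),
    Finset.sum_insert (by simp [hbc]), Finset.sum_singleton]
  ring

lemma mem3 {a b c : Fin 3} (hab : a ≠ b) (hac : a ≠ c) (hbc : b ≠ c) (x : Fin 3) :
    x = a ∨ x = b ∨ x = c := by
  have : x ∈ (Finset.univ : Finset (Fin 3)) := Finset.mem_univ x
  rw [univ3 hab hac hbc] at this
  simpa using this

end Infra

/-- canonical utility with order `a>b>c` and rate of middle substitution `r` -/
noncomputable def V (a b c : Fin 3) (r : ℝ) : Fin 3 → ℝ :=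
  fun x => if x = a then (5 - 2*r)/3 else if x = b then (4*r - 1)/3 else (-1 - 2*r)/3

/-- score used for EU comparisons -/
def sc (a b : Fin 3) (r : ℝ) (ρ : Fin 3 → ℝ) : ℝ := ρ a + r * ρ b

section Vfacts

lemma V_a {a b c : Fin 3} (r : ℝ) : V a b c r a = (5 - 2*r)/3 := by simp [V]

lemma V_b {a b c : Fin 3} (hab : a ≠ b) (r : ℝ) : V a b c r b = (4*r - 1)/3 := by
  simp [V, Ne.symm hab]

lemma V_c {a b c : Fin 3} (hac : a ≠ c) (hbc : b ≠ c) (r : ℝ) :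
    V a b c r c = (-1 - 2*r)/3 := by
  simp [V, Ne.symm hac, Ne.symm hbc]

lemma V_norm {a b c : Fin 3} (hab : a ≠ b) (hac : a ≠ c) (hbc : b ≠ c) (r : ℝ) :
    Normalized (V a b c r) := by
  unfold Normalized
  rw [sum3 hab hac hbc, V_a, V_b hab, V_c hac hbc]
  ring

lemma V_noties {a b c : Fin 3} (hab : a ≠ b) (hac : a ≠ c) (hbc : b ≠ c)
    {r : ℝ} (h0 : 0 < r) (h1 : r < 1) : NoTies (V a b c r) := by
  have va := V_a (a := a) (b := b) (c := c) r
  have vb := V_b (a := a) (c := c) hab r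
  have vc := V_c (a := a) (b := b) hac hbc r
  intro x y hxy
  rcases mem3 hab hac hbc x with hx | hx | hx <;>
    rcases mem3 hab hac hbc y with hy | hy | hy <;>
      rw [hx, hy] <;> rw [hx] at hxy <;> rw [hy] at hxy <;>
        first
        | exact absurd rfl hxy
        | (rw [va, vb]; intro h; nlinarith)
        | (rw [va, vc]; intro h; nlinarith)
        | (rw [vb, va]; intro h; nlinarith)
        | (rw [vb, vc]; intro h; nlinarith)
        | (rw [vc, va]; intro h; nlinarith)
        | (rw [vc, vb]; intro h; nlinarith)

lemma V_ord_ab {a b c : Fin 3} (hab : a ≠ b) {r : ℝ} (h1 : r < 1) :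
    V a b c r a > V a b c r b := by
  rw [V_a, V_b hab]; nlinarith

lemma V_ord_bc {a b c : Fin 3} (hab : a ≠ b) (hac : a ≠ c) (hbc : b ≠ c) {r : ℝ} (h0 : 0 < r) :
    V a b c r b > V a b c r c := by
  rw [V_b hab, V_c hac hbc]; nlinarith

lemma V_ord_ac {a b c : Fin 3} (hac : a ≠ c) (hbc : b ≠ c) {r : ℝ} (h0 : 0 < r) (h1 : r < 1) :
    V a b c r a > V a b c r c := by
  rw [V_a, V_c hac hbc]; nlinarith

lemma rate_V {a b c : Fin 3} (hab : a ≠ b) (hac : a ≠ c) (hbc : b ≠ c) (r : ℝ) :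
    (V a b c r b - V a b c r c) / (V a b c r a - V a b c r c) = r := by
  rw [V_a, V_b hab, V_c hac hbc]
  have h2 : (5 - 2*r)/3 - (-1 - 2*r)/3 = 2 := by ring
  have h1 : (4*r - 1)/3 - (-1 - 2*r)/3 = 2*r := by ring
  rw [h1, h2]
  ring

lemma V_cont {a b c : Fin 3} (x : Fin 3) : Continuous (fun u : ℝ => V a b c u x) := by
  unfold V
  by_cases hxa : x = a
  · simp only [if_pos hxa]; fun_prop
  · simp only [if_neg hxa]
    by_cases hxb : x = b
    · simp only [if_pos hxb]; fun_prop
    · simp only [if_neg hxb]; fun_prop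

end Vfacts

section EUfacts

lemma EU_expand {a b c : Fin 3} (hab : a ≠ b) (hac : a ≠ c) (hbc : b ≠ c)
    (w ρ : Fin 3 → ℝ) :
    EU w ρ = w a * ρ a + w b * ρ b + w c * ρ c := by
  unfold EU; rw [sum3 hab hac hbc]

/-- EU comparisons reduce to score comparisons. -/
lemma EU_ge_iff_sc {a b c : Fin 3} (hab : a ≠ b) (hac : a ≠ c) (hbc : b ≠ c)
    (w : Fin 3 → ℝ) (hwac : w a > w c) (ρ ρ' : Fin 3 → ℝ)
    (hρ : ρ a + ρ b + ρ c = 1) (hρ' : ρ' a + ρ' b + ρ' c = 1) :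
    (EU w ρ ≥ EU w ρ' ↔
      sc a b ((w b - w c)/(w a - w c)) ρ ≥ sc a b ((w b - w c)/(w a - w c)) ρ') := by
  have hne : w a - w c ≠ 0 := by linarith
  have key : ∀ σ : Fin 3 → ℝ, σ a + σ b + σ c = 1 →
      EU w σ = w c + (w a - w c) * sc a b ((w b - w c)/(w a - w c)) σ := by
    intro σ hσ
    have hrw : w b - w c = (w b - w c)/(w a - w c) * (w a - w c) :=
      (div_mul_cancel₀ _ hne).symm
    rw [EU_expand hab hac hbc]
    unfold sc
    linear_combination σ b * hrw + w c * hσ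
  rw [key ρ hρ, key ρ' hρ']
  constructor
  · intro h; nlinarith
  · intro h; nlinarith

end EUfacts

section ProfileFacts

lemma update_preserves_noties {u : Fin 3 → Fin 3 → ℝ} (hu : NoTiesProfile u)
    (l : Fin 3) {w : Fin 3 → ℝ} (hw : NoTies w) :
    NoTiesProfile (Function.update u l w) := by
  intro m
  rcases eq_or_ne m l with h | h
  · subst h; rw [Function.update_self]; exact hw
  · rw [Function.update_of_ne h]; exact hu m

lemma row1 {φ : (Fin 3 → Fin 3 → ℝ) → Fin 3 → Fin 3 → ℝ} (hB : BistochasticValued φ)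
    {a b c : Fin 3} (hab : a ≠ b) (hac : a ≠ c) (hbc : b ≠ c)
    {W : Fin 3 → Fin 3 → ℝ} (hW : NoTiesProfile W) (l : Fin 3) :
    φ W l a + φ W l b + φ W l c = 1 := by
  have h := (hB W hW).2.1 l
  rwa [sum3 hab hac hbc] at h

lemma entry_nonneg {φ : (Fin 3 → Fin 3 → ℝ) → Fin 3 → Fin 3 → ℝ} (hB : BistochasticValued φ)
    {W : Fin 3 → Fin 3 → ℝ} (hW : NoTiesProfile W) (l z : Fin 3) :
    0 ≤ φ W l z := (hB W hW).1 l z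

lemma col_other_zero {φ : (Fin 3 → Fin 3 → ℝ) → Fin 3 → Fin 3 → ℝ} (hB : BistochasticValued φ)
    {W : Fin 3 → Fin 3 → ℝ} (hW : NoTiesProfile W) {α : Fin 3} {z : Fin 3}
    (h1 : φ W α z = 1) {l : Fin 3} (hl : l ≠ α) : φ W l z = 0 := by
  have hcol := (hB W hW).2.2 z
  have hsplit : ∑ m, φ W m z = φ W α z + ∑ m ∈ Finset.univ.erase α, φ W m z :=
    (Finset.add_sum_erase _ _ (Finset.mem_univ α)).symm
  rw [hcol, h1] at hsplit
  have hzero : ∑ m ∈ Finset.univ.erase α, φ W m z = 0 := by linarith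
  have := (Finset.sum_eq_zero_iff_of_nonneg (fun m _ => (hB W hW).1 m z)).mp hzero
  exact this l (Finset.mem_erase.mpr ⟨hl, Finset.mem_univ l⟩)

/-- if agent α has no b-share but some other agent β holds both a and c,
    then α holds both a and c positively -/
lemma colforce {φ : (Fin 3 → Fin 3 → ℝ) → Fin 3 → Fin 3 → ℝ} (hB : BistochasticValued φ)
    {a b c : Fin 3} (hab : a ≠ b) (hac : a ≠ c) (hbc : b ≠ c)
    {W : Fin 3 → Fin 3 → ℝ} (hW : NoTiesProfile W) {α β : Fin 3} (hαβ : α ≠ β)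
    (hb0 : φ W α b = 0) (hβa : 0 < φ W β a) (hβc : 0 < φ W β c) :
    0 < φ W α a ∧ 0 < φ W α c := by
  constructor
  · rcases (entry_nonneg hB hW α a).lt_or_eq with h | h
    · exact h
    · exfalso
      have hc1 : φ W α c = 1 := by have := row1 hB hab hac hbc hW α; linarith
      have := col_other_zero hB hW hc1 (Ne.symm hαβ)
      linarith
  · rcases (entry_nonneg hB hW α c).lt_or_eq with h | h
    · exact h
    · exfalso
      have ha1 : φ W α a = 1 := by have := row1 hB hab hac hbc hW α; linarith
      have := col_other_zero hB hW ha1 (Ne.symm hαβ)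
      linarith

end ProfileFacts
section SP

/-- Pairwise strategy-proofness inequalities in score form, for deviations
    from a true utility ordered `a>b>c` to a canonical report `V s`. -/
lemma sp_pair {φ : (Fin 3 → Fin 3 → ℝ) → Fin 3 → Fin 3 → ℝ}
    (hB : BistochasticValued φ) (hSP : StrategyProof φ)
    {a b c : Fin 3} (hab : a ≠ b) (hac : a ≠ c) (hbc : b ≠ c)
    {W : Fin 3 → Fin 3 → ℝ} (hW : NoTiesProfile W) (l : Fin 3)
    (hl1 : W l a > W l b) (hl2 : W l b > W l c)
    {s : ℝ} (hs0 : 0 < s) (hs1 : s < 1) :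
    sc a b ((W l b - W l c)/(W l a - W l c)) (φ (Function.update W l (V a b c s)) l)
      ≤ sc a b ((W l b - W l c)/(W l a - W l c)) (φ W l)
    ∧ sc a b s (φ W l) ≤ sc a b s (φ (Function.update W l (V a b c s)) l) := by
  have hnt : NoTies (V a b c s) := V_noties hab hac hbc hs0 hs1
  have hW' : NoTiesProfile (Function.update W l (V a b c s)) :=
    update_preserves_noties hW l hnt
  have hrowW := row1 hB hab hac hbc hW l
  have hrowW' := row1 hB hab hac hbc hW' l
  constructor
  · have h1 := hSP W l (V a b c s) hW hnt
    exact (EU_ge_iff_sc hab hac hbc (W l) (by linarith) _ _ hrowW hrowW').mp h1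
  · have h2 := hSP (Function.update W l (V a b c s)) l (W l) hW' (hW l)
    have hupd : Function.update (Function.update W l (V a b c s)) l (W l) = W := by
      rw [Function.update_idem, Function.update_eq_self]
    rw [hupd] at h2
    have hVl : (Function.update W l (V a b c s)) l = V a b c s := Function.update_self ..
    rw [hVl] at h2
    have := (EU_ge_iff_sc hab hac hbc (V a b c s)
      (V_ord_ac hac hbc hs0 hs1) _ _ hrowW' hrowW).mp h2
    rwa [rate_V hab hac hbc] at this

/-- Pairwise SP inequalities between two canonical reports. -/
lemma sp_pairVV {φ : (Fin 3 → Fin 3 → ℝ) → Fin 3 → Fin 3 → ℝ}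
    (hB : BistochasticValued φ) (hSP : StrategyProof φ)
    {a b c : Fin 3} (hab : a ≠ b) (hac : a ≠ c) (hbc : b ≠ c)
    {W : Fin 3 → Fin 3 → ℝ} (hW : NoTiesProfile W) (l : Fin 3)
    {s s' : ℝ} (hs0 : 0 < s) (hs1 : s < 1) (hs0' : 0 < s') (hs1' : s' < 1) :
    sc a b s' (φ (Function.update W l (V a b c s)) l)
      ≤ sc a b s' (φ (Function.update W l (V a b c s')) l)
    ∧ sc a b s (φ (Function.update W l (V a b c s')) l)
      ≤ sc a b s (φ (Function.update W l (V a b c s)) l) := by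
  have hnt' : NoTies (V a b c s') := V_noties hab hac hbc hs0' hs1'
  have hW' : NoTiesProfile (Function.update W l (V a b c s')) :=
    update_preserves_noties hW l hnt'
  have hVl : (Function.update W l (V a b c s')) l = V a b c s' := Function.update_self ..
  have h := sp_pair hB hSP hab hac hbc hW' l
    (by rw [hVl]; exact V_ord_ab hab hs1') (by rw [hVl]; exact V_ord_bc hab hac hbc hs0')
    hs0 hs1
  rw [Function.update_idem] at h
  rw [hVl, rate_V hab hac hbc] at h
  exact h

/-- Freeze: if deviating between two canonical reports leaves the b-share
    unchanged, the whole matrix is unchanged (via non-bossiness). -/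
lemma freeze {φ : (Fin 3 → Fin 3 → ℝ) → Fin 3 → Fin 3 → ℝ}
    (hB : BistochasticValued φ) (hSP : StrategyProof φ) (hNB : NonBossy φ)
    {a b c : Fin 3} (hab : a ≠ b) (hac : a ≠ c) (hbc : b ≠ c)
    {W : Fin 3 → Fin 3 → ℝ} (hW : NoTiesProfile W) (l : Fin 3)
    {s s' : ℝ} (hs0 : 0 < s) (hs1 : s < 1) (hs0' : 0 < s') (hs1' : s' < 1)
    (hbeq : φ (Function.update W l (V a b c s)) l b
      = φ (Function.update W l (V a b c s')) l b) :
    φ (Function.update W l (V a b c s)) = φ (Function.update W l (V a b c s')) := by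
  have hnt : NoTies (V a b c s) := V_noties hab hac hbc hs0 hs1
  have hnt' : NoTies (V a b c s') := V_noties hab hac hbc hs0' hs1'
  have hWs : NoTiesProfile (Function.update W l (V a b c s)) :=
    update_preserves_noties hW l hnt
  have hWs' : NoTiesProfile (Function.update W l (V a b c s')) :=
    update_preserves_noties hW l hnt'
  have h := sp_pairVV hB hSP hab hac hbc hW l hs0 hs1 hs0' hs1'
  have haeq : φ (Function.update W l (V a b c s)) l a
      = φ (Function.update W l (V a b c s')) l a := by
    have h1 := h.1; have h2 := h.2
    unfold sc at h1 h2
    rw [hbeq] at h1 h2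
    linarith
  have hceq : φ (Function.update W l (V a b c s)) l c
      = φ (Function.update W l (V a b c s')) l c := by
    have r1 := row1 hB hab hac hbc hWs l
    have r2 := row1 hB hab hac hbc hWs' l
    linarith
  have hroweq : φ (Function.update W l (V a b c s)) l
      = φ (Function.update W l (V a b c s')) l := by
    funext z
    rcases mem3 hab hac hbc z with hz | hz | hz <;> rw [hz] <;> assumption
  have hNBapp := hNB (Function.update W l (V a b c s)) l (V a b c s') hWs hnt'
  rw [Function.update_idem] at hNBapp
  exact hNBapp hroweq

end SP

section Cont

lemma tendsto_entry {F : ℕ → Fin 3 → Fin 3 → ℝ} {L : Fin 3 → Fin 3 → ℝ}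
    (h : Filter.Tendsto F Filter.atTop (nhds L)) (l z : Fin 3) :
    Filter.Tendsto (fun n => F n l z) Filter.atTop (nhds (L l z)) :=
  (tendsto_pi_nhds.mp ((tendsto_pi_nhds.mp h) l)) z

/-- continuity of the rule along canonical sequences -/
lemma cont_seq {φ : (Fin 3 → Fin 3 → ℝ) → Fin 3 → Fin 3 → ℝ} (hC : NCContinuous φ)
    {a b c : Fin 3} (hab : a ≠ b) (hac : a ≠ c) (hbc : b ≠ c)
    {W : Fin 3 → Fin 3 → ℝ} (hW : NoTiesProfile W) (l : Fin 3)
    {r : ℝ} (hWl : W l = V a b c r)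
    (t : ℕ → ℝ) (ht : ∀ n, 0 < t n ∧ t n < 1)
    (hlim : Filter.Tendsto t Filter.atTop (nhds r)) :
    Filter.Tendsto (fun n => φ (Function.update W l (V a b c (t n))))
      Filter.atTop (nhds (φ W)) := by
  apply hC W l (fun n => V a b c (t n)) hW
  · rw [hWl]; exact V_norm hab hac hbc r
  · intro n
    exact ⟨V_noties hab hac hbc (ht n).1 (ht n).2, V_norm hab hac hbc (t n)⟩
  · rw [hWl]
    apply tendsto_pi_nhds.mpr
    intro x
    exact ((V_cont (a := a) (b := b) (c := c) x).tendsto r).comp hlim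

end Cont
section Trade
set_option maxHeartbeats 1000000 in

/-- If agent α (rate rα) holds both a and c, agent β (rate rβ < rα) holds b,
    then the allocation is dominated: contradiction with efficiency. -/
lemma tradeV {φ : (Fin 3 → Fin 3 → ℝ) → Fin 3 → Fin 3 → ℝ}
    (hB : BistochasticValued φ) (hE : Efficient φ)
    {a b c : Fin 3} (hab : a ≠ b) (hac : a ≠ c) (hbc : b ≠ c)
    {W : Fin 3 → Fin 3 → ℝ} (hW : NoTiesProfile W) {α β : Fin 3} (hαβ : α ≠ β)
    {rα rβ : ℝ} (h0 : 0 < rβ) (hr : rβ < rα) (h1 : rα < 1)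
    (hWα : W α = V a b c rα) (hWβ : W β = V a b c rβ)
    (hpa : 0 < φ W α a) (hpc : 0 < φ W α c) (hpb : 0 < φ W β b) : False := by
  obtain ⟨hnn, hrow, hcol⟩ := hB W hW
  set ρ := φ W with hρdef
  set x : ℝ := (rα + rβ)/2 with hxdef
  set y : ℝ := 1 - x with hydef
  have hx0 : 0 < x := by rw [hxdef]; linarith
  have hx1 : x < 1 := by rw [hxdef]; linarith
  have hy0 : 0 < y := by rw [hydef]; linarith
  set ε : ℝ := min (min (ρ α a / x) (ρ α c / y)) (ρ β b) with hεdef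
  have hε0 : 0 < ε := by
    apply lt_min (lt_min _ _) hpb <;> positivity
  have hεx : ε * x ≤ ρ α a := by
    have h1' : ε ≤ ρ α a / x := le_trans (min_le_left _ _) (min_le_left _ _)
    calc ε * x ≤ (ρ α a / x) * x := by nlinarith
    _ = ρ α a := div_mul_cancel₀ _ (ne_of_gt hx0)
  have hεy : ε * y ≤ ρ α c := by
    have h1' : ε ≤ ρ α c / y := le_trans (min_le_left _ _) (min_le_right _ _)
    calc ε * y ≤ (ρ α c / y) * y := by nlinarith
    _ = ρ α c := div_mul_cancel₀ _ (ne_of_gt hy0)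
  have hεb : ε ≤ ρ β b := min_le_right _ _
  -- the trade direction
  set E : Fin 3 → ℝ := fun z => if z = a then -x else if z = b then 1 else -y with hEdef
  have hEa : E a = -x := by simp [hEdef]
  have hEb : E b = 1 := by simp [hEdef, Ne.symm hab]
  have hEc : E c = -y := by simp [hEdef, Ne.symm hac, Ne.symm hbc]
  set D : Fin 3 → Fin 3 → ℝ :=
    fun l z => if l = α then E z else if l = β then -(E z) else 0 with hDdef
  have hDα : ∀ z, D α z = E z := by intro z; simp [hDdef]
  have hDβ : ∀ z, D β z = -(E z) := by intro z; simp [hDdef, Ne.symm hαβ]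
  have hDo : ∀ l, l ≠ α → l ≠ β → ∀ z, D l z = 0 := by
    intro l hlα hlβ z; simp [hDdef, hlα, hlβ]
  set π' : Fin 3 → Fin 3 → ℝ := fun l z => ρ l z + ε * D l z with hπ'def
  -- bistochasticity of π'
  have hbist : Bistochastic π' := by
    refine ⟨?_, ?_, ?_⟩
    · intro l z
      rcases eq_or_ne l α with hl | hl
      · rw [hl, hπ'def]
        simp only
        rw [hDα]
        rcases mem3 hab hac hbc z with hz | hz | hz <;> rw [hz]
        · rw [hEa]; nlinarith
        · rw [hEb]; nlinarith [hnn α b]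
        · rw [hEc]; nlinarith
      · rcases eq_or_ne l β with hl' | hl'
        · rw [hl', hπ'def]; simp only; rw [hDβ]
          rcases mem3 hab hac hbc z with hz | hz | hz <;> rw [hz]
          · rw [hEa]; nlinarith [hnn β a]
          · rw [hEb]; nlinarith
          · rw [hEc]; nlinarith [hnn β c]
        · rw [hπ'def]; simp only; rw [hDo l hl hl']
          simpa using hnn l z
    · intro l
      rw [sum3 hab hac hbc]
      have hr1 : ρ l a + ρ l b + ρ l c = 1 := by
        have := hrow l; rwa [sum3 hab hac hbc] at this
      rcases eq_or_ne l α with hl | hl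
      · rw [hl, hπ'def]; simp only; rw [hDα, hDα, hDα, hEa, hEb, hEc]
        rw [hl] at hr1
        rw [hydef]; linarith [hr1]
      · rcases eq_or_ne l β with hl' | hl'
        · rw [hl', hπ'def]; simp only; rw [hDβ, hDβ, hDβ, hEa, hEb, hEc]
          rw [hl'] at hr1
          rw [hydef]; linarith [hr1]
        · rw [hπ'def]; simp only; rw [hDo l hl hl' a, hDo l hl hl' b, hDo l hl hl' c]
          linarith [hr1]
    · intro z
      have hsplit : ∀ l, D l z = (if l = α then E z else 0) + (if l = β then -(E z) else 0) := by
        intro l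
        rcases eq_or_ne l α with h | h
        · subst h; simp [hDdef, Ne.symm hαβ, hαβ]
        · rcases eq_or_ne l β with h' | h'
          · subst h'; simp [hDdef, Ne.symm hαβ, h]
          · simp [hDdef, h, h']
      have hsum : ∑ l, D l z = 0 := by
        calc ∑ l, D l z
            = ∑ l, ((if l = α then E z else 0) + (if l = β then -(E z) else 0)) := by
              apply Finset.sum_congr rfl; intro l _; exact hsplit l
          _ = (∑ l, (if l = α then E z else 0)) + ∑ l, (if l = β then -(E z) else 0) :=
              Finset.sum_add_distrib
          _ = E z + -(E z) := by
              rw [Finset.sum_ite_eq' Finset.univ α (fun _ => E z),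
                Finset.sum_ite_eq' Finset.univ β (fun _ => -(E z))]
              simp
          _ = 0 := by ring
      have : ∑ l, π' l z = ∑ l, ρ l z + ε * ∑ l, D l z := by
        rw [Finset.mul_sum, ← Finset.sum_add_distrib]
      rw [this, hsum, hcol z]
      ring
  -- domination
  have hEUeq : ∀ l, l ≠ α → l ≠ β → EU (W l) (π' l) = EU (W l) (ρ l) := by
    intro l h1' h2'
    have : π' l = ρ l := by
      funext z; rw [hπ'def]; simp only; rw [hDo l h1' h2']; ring
    rw [this]
  have hEUα : EU (W α) (π' α) > EU (W α) (ρ α) := by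
    rw [EU_expand hab hac hbc, EU_expand hab hac hbc]
    rw [hπ'def]; simp only
    rw [hDα, hDα, hDα, hEa, hEb, hEc, hWα, V_a, V_b hab, V_c hac hbc]
    have expand : (5 - 2*rα)/3 * (ρ α a + ε * -x) + (4*rα - 1)/3 * (ρ α b + ε * 1)
        + (-1 - 2*rα)/3 * (ρ α c + ε * -y)
        - ((5 - 2*rα)/3 * ρ α a + (4*rα - 1)/3 * ρ α b + (-1 - 2*rα)/3 * ρ α c)
        = ε * 2 * (rα - x) := by
      rw [hydef]; ring
    have hgt : (0:ℝ) < rα - x := by rw [hxdef]; linarith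
    have hprod : 0 < ε * 2 * (rα - x) := mul_pos (mul_pos hε0 (by norm_num)) hgt
    linarith [expand, hprod]
  have hEUβ : EU (W β) (π' β) > EU (W β) (ρ β) := by
    rw [EU_expand hab hac hbc, EU_expand hab hac hbc]
    rw [hπ'def]; simp only
    rw [hDβ, hDβ, hDβ, hEa, hEb, hEc, hWβ, V_a, V_b hab, V_c hac hbc]
    have expand : (5 - 2*rβ)/3 * (ρ β a + ε * -(-x)) + (4*rβ - 1)/3 * (ρ β b + ε * -(1))
        + (-1 - 2*rβ)/3 * (ρ β c + ε * -(-y))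
        - ((5 - 2*rβ)/3 * ρ β a + (4*rβ - 1)/3 * ρ β b + (-1 - 2*rβ)/3 * ρ β c)
        = ε * 2 * (x - rβ) := by
      rw [hydef]; ring
    have hgt : (0:ℝ) < x - rβ := by rw [hxdef]; linarith
    have hprod : 0 < ε * 2 * (x - rβ) := mul_pos (mul_pos hε0 (by norm_num)) hgt
    linarith [expand, hprod]
  have hdom : Dominates W π' ρ := by
    constructor
    · intro l
      rcases eq_or_ne l α with h | h
      · rw [h]; exact le_of_lt hEUα
      · rcases eq_or_ne l β with h' | h'
        · rw [h']; exact le_of_lt hEUβ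
        · exact ge_of_eq (hEUeq l h h')
    · exact ⟨α, hEUα⟩
  exact hE W hW ⟨π', hbist, hdom⟩

end Trade
section Canon

lemma tendsto_shift (r δ : ℝ) :
    Filter.Tendsto (fun n : ℕ => r + δ/((n:ℝ)+2)) Filter.atTop (nhds r) := by
  have h1 : Filter.Tendsto (fun n : ℕ => ((n:ℝ)+2)) Filter.atTop Filter.atTop :=
    Filter.tendsto_atTop_add_const_right _ 2 tendsto_natCast_atTop_atTop
  have h2 : Filter.Tendsto (fun n : ℕ => (((n:ℝ)+2))⁻¹) Filter.atTop (nhds 0) :=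
    h1.inv_tendsto_atTop
  have h3 : Filter.Tendsto (fun n : ℕ => δ * (((n:ℝ)+2))⁻¹) Filter.atTop (nhds 0) := by
    simpa using h2.const_mul δ
  have h4 : Filter.Tendsto (fun n : ℕ => r + δ*(((n:ℝ)+2))⁻¹) Filter.atTop (nhds (r+0)) :=
    Filter.Tendsto.add tendsto_const_nhds h3
  simpa [div_eq_mul_inv] using h4

lemma shift_above_mem (r : ℝ) (hr0 : 0 < r) (hr1 : r < 1) (n : ℕ) :
    r < r + (1-r)/((n:ℝ)+2) ∧ r + (1-r)/((n:ℝ)+2) < 1 := by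
  have hn : (0:ℝ) < (n:ℝ) + 2 := by positivity
  have h2 : (2:ℝ) ≤ (n:ℝ) + 2 := by
    have : (0:ℝ) ≤ (n:ℝ) := Nat.cast_nonneg n
    linarith
  constructor
  · have : 0 < (1-r)/((n:ℝ)+2) := div_pos (by linarith) hn
    linarith
  · have : (1-r)/((n:ℝ)+2) ≤ (1-r)/2 := by
      apply div_le_div_of_nonneg_left (by linarith) (by norm_num) h2
    linarith

lemma shift_below_mem (r : ℝ) (hr0 : 0 < r) (hr1 : r < 1) (n : ℕ) :
    0 < r + (-r)/((n:ℝ)+2) ∧ r + (-r)/((n:ℝ)+2) < r := by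
  have hn : (0:ℝ) < (n:ℝ) + 2 := by positivity
  have h2 : (2:ℝ) ≤ (n:ℝ) + 2 := by
    have : (0:ℝ) ≤ (n:ℝ) := Nat.cast_nonneg n
    linarith
  constructor
  · have h3 : r/((n:ℝ)+2) ≤ r/2 := by
      apply div_le_div_of_nonneg_left (by linarith) (by norm_num) h2
    have : (-r)/((n:ℝ)+2) = -(r/((n:ℝ)+2)) := by ring
    rw [this]; linarith
  · have : 0 < r/((n:ℝ)+2) := by positivity
    have h4 : (-r)/((n:ℝ)+2) = -(r/((n:ℝ)+2)) := by ring
    rw [h4]; linarith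

/-- Canonicalization: replacing an agent's utility (ordered a>b>c) by the canonical
    utility with the same rate of middle substitution does not change the outcome. -/
lemma canon {φ : (Fin 3 → Fin 3 → ℝ) → Fin 3 → Fin 3 → ℝ}
    (hB : BistochasticValued φ) (hSP : StrategyProof φ) (hNB : NonBossy φ)
    (hC : NCContinuous φ)
    {a b c : Fin 3} (hab : a ≠ b) (hac : a ≠ c) (hbc : b ≠ c)
    {W : Fin 3 → Fin 3 → ℝ} (hW : NoTiesProfile W) (l : Fin 3)
    (h1 : W l a > W l b) (h2 : W l b > W l c) :
    φ (Function.update W l (V a b c ((W l b - W l c)/(W l a - W l c)))) = φ W := by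
  set r : ℝ := (W l b - W l c)/(W l a - W l c) with hrdef
  have hr0 : 0 < r := div_pos (by linarith) (by linarith)
  have hr1 : r < 1 := (div_lt_one (by linarith)).mpr (by linarith)
  have hnt : NoTies (V a b c r) := V_noties hab hac hbc hr0 hr1
  set D := Function.update W l (V a b c r) with hDdef
  have hD : NoTiesProfile D := update_preserves_noties hW l hnt
  have hDl : D l = V a b c r := Function.update_self ..
  -- score equality at rate r
  have hE0 := sp_pair hB hSP hab hac hbc hW l h1 h2 hr0 hr1
  rw [← hrdef] at hE0
  -- one-sided b-monotonicity
  have hbmono : ∀ t : ℝ, 0 < t → t < 1 →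
      (t - r) * (φ (Function.update W l (V a b c t)) l b - φ W l b) ≥ 0 := by
    intro t ht0 ht1
    have hsp := sp_pair hB hSP hab hac hbc hW l h1 h2 ht0 ht1
    rw [← hrdef] at hsp
    obtain ⟨hA, hBt⟩ := hsp
    unfold sc at hA hBt
    nlinarith [hA, hBt]
  -- convergence from above
  have hconvA : Filter.Tendsto
      (fun n : ℕ => φ (Function.update W l (V a b c (r + (1-r)/((n:ℝ)+2)))))
      Filter.atTop (nhds (φ D)) := by
    have := cont_seq hC hab hac hbc hD l hDl (fun n => r + (1-r)/((n:ℝ)+2))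
      (fun n => ⟨lt_trans hr0 (shift_above_mem r hr0 hr1 n).1, (shift_above_mem r hr0 hr1 n).2⟩)
      (tendsto_shift r (1-r))
    simpa [hDdef, Function.update_idem] using this
  have hconvB : Filter.Tendsto
      (fun n : ℕ => φ (Function.update W l (V a b c (r + (-r)/((n:ℝ)+2)))))
      Filter.atTop (nhds (φ D)) := by
    have := cont_seq hC hab hac hbc hD l hDl (fun n => r + (-r)/((n:ℝ)+2))
      (fun n => ⟨(shift_below_mem r hr0 hr1 n).1, lt_trans (shift_below_mem r hr0 hr1 n).2 hr1⟩)
      (tendsto_shift r (-r))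
    simpa [hDdef, Function.update_idem] using this
  -- b-components agree
  have hbge : φ D l b ≥ φ W l b := by
    apply ge_of_tendsto (tendsto_entry hconvA l b)
    apply Filter.Eventually.of_forall
    intro n
    have hmem := shift_above_mem r hr0 hr1 n
    have := hbmono (r + (1-r)/((n:ℝ)+2)) (lt_trans hr0 hmem.1) hmem.2
    nlinarith [this, hmem.1]
  have hble : φ D l b ≤ φ W l b := by
    apply le_of_tendsto (tendsto_entry hconvB l b)
    apply Filter.Eventually.of_forall
    intro n
    have hmem := shift_below_mem r hr0 hr1 n
    have := hbmono (r + (-r)/((n:ℝ)+2)) hmem.1 (lt_trans hmem.2 hr1)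
    nlinarith [this, hmem.2]
  have hbeq : φ D l b = φ W l b := le_antisymm hble hbge
  -- a-components agree
  have haeq : φ D l a = φ W l a := by
    obtain ⟨hA, hBt⟩ := hE0
    unfold sc at hA hBt
    rw [← hDdef] at hA hBt
    rw [← hbeq] at hA hBt
    linarith
  have hceq : φ D l c = φ W l c := by
    have r1 := row1 hB hab hac hbc hD l
    have r2 := row1 hB hab hac hbc hW l
    linarith
  have hrow : φ W l = φ D l := by
    funext z
    rcases mem3 hab hac hbc z with hz | hz | hz
    · rw [hz]; exact haeq.symm
    · rw [hz]; exact hbeq.symm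
    · rw [hz]; exact hceq.symm
  exact (hNB W l (V a b c r) hW hnt hrow).symm

end Canon
section Qref

lemma shift_between {u v : ℝ} (huv : u < v) (n : ℕ) :
    u < u + (v-u)/((n:ℝ)+2) ∧ u + (v-u)/((n:ℝ)+2) < v := by
  have hn : (0:ℝ) < (n:ℝ) + 2 := by positivity
  have h2 : (2:ℝ) ≤ (n:ℝ) + 2 := by
    have : (0:ℝ) ≤ (n:ℝ) := Nat.cast_nonneg n
    linarith
  constructor
  · have : 0 < (v-u)/((n:ℝ)+2) := div_pos (by linarith) hn
    linarith
  · have : (v-u)/((n:ℝ)+2) ≤ (v-u)/2 := by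
      apply div_le_div_of_nonneg_left (by linarith) (by norm_num) h2
    linarith

/-- Refutation of a "shed" state: α's b-share vanished, β holds a & c (and b). -/
lemma Qref {φ : (Fin 3 → Fin 3 → ℝ) → Fin 3 → Fin 3 → ℝ}
    (hB : BistochasticValued φ) (hE : Efficient φ) (hSP : StrategyProof φ)
    (hNB : NonBossy φ) (hC : NCContinuous φ)
    {a b c : Fin 3} (hab : a ≠ b) (hac : a ≠ c) (hbc : b ≠ c)
    {Y : Fin 3 → Fin 3 → ℝ} (hY : NoTiesProfile Y) {α β : Fin 3} (hαβ : α ≠ β)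
    {p s : ℝ} (hp0 : 0 < p) (hps : p < s) (hs1 : s < 1)
    (hYα : Y α = V a b c p) (hYβ : Y β = V a b c s)
    (hQβa : 0 < φ Y β a) (hQβc : 0 < φ Y β c)
    (hQαb : φ Y α b = 0) (hQαa : 0 < φ Y α a) (hQαc : 0 < φ Y α c)
    (hQβb : 0 < φ Y β b) : False := by
  have hp1 : p < 1 := lt_trans hps hs1
  have hs0 : 0 < s := lt_trans hp0 hps
  have hPp : Function.update Y α (V a b c p) = Y := by
    rw [← hYα]; exact Function.update_eq_self α Y
  set S : Set ℝ := {t | p ≤ t ∧ t < s ∧ φ (Function.update Y α (V a b c t)) = φ Y}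
    with hSdef
  have hpS : p ∈ S := ⟨le_refl p, hps, by rw [hPp]⟩
  have hSbdd : BddAbove S := ⟨s, fun t ht => le_of_lt ht.2.1⟩
  have hSne : S.Nonempty := ⟨p, hpS⟩
  set σ := sSup S with hσdef
  have hσlb : p ≤ σ := le_csSup hSbdd hpS
  have hσub : σ ≤ s := csSup_le hSne (fun t ht => le_of_lt ht.2.1)
  have hσ0 : 0 < σ := lt_of_lt_of_le hp0 hσlb
  have hσ1 : σ < 1 := lt_of_le_of_lt hσub hs1
  have hntσ : NoTies (V a b c σ) := V_noties hab hac hbc hσ0 hσ1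
  have hYσ : NoTiesProfile (Function.update Y α (V a b c σ)) :=
    update_preserves_noties hY α hntσ
  have hYσl : (Function.update Y α (V a b c σ)) α = V a b c σ := Function.update_self ..
  -- sequence within S approaching σ
  have hex : ∀ n : ℕ, ∃ t ∈ S, σ - 1/((n:ℝ)+2) < t := by
    intro n
    apply exists_lt_of_lt_csSup hSne
    have : (0:ℝ) < 1/((n:ℝ)+2) := by positivity
    linarith
  choose tseq htseqS htseqgt using hex
  have htle : ∀ n, tseq n ≤ σ := fun n => le_csSup hSbdd (htseqS n)
  have htlim : Filter.Tendsto tseq Filter.atTop (nhds σ) := by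
    have hlow : Filter.Tendsto (fun n : ℕ => σ + (-1)/((n:ℝ)+2)) Filter.atTop (nhds σ) :=
      tendsto_shift σ (-1)
    apply tendsto_of_tendsto_of_tendsto_of_le_of_le hlow tendsto_const_nhds
    · intro n
      have h' := htseqgt n
      show σ + (-1)/((n:ℝ)+2) ≤ tseq n
      have heq : σ + (-1)/((n:ℝ)+2) = σ - 1/((n:ℝ)+2) := by ring
      linarith
    · exact htle
  have hPσ : φ (Function.update Y α (V a b c σ)) = φ Y := by
    have hconv := cont_seq hC hab hac hbc hYσ α hYσl tseq
      (fun n => ⟨lt_of_lt_of_le hp0 (htseqS n).1, lt_trans (htseqS n).2.1 hs1⟩) htlim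
    have hconv' : Filter.Tendsto (fun n => φ (Function.update Y α (V a b c (tseq n))))
        Filter.atTop (nhds (φ (Function.update Y α (V a b c σ)))) := by
      simpa [Function.update_idem] using hconv
    have hconst : Filter.Tendsto (fun n => φ (Function.update Y α (V a b c (tseq n))))
        Filter.atTop (nhds (φ Y)) := by
      have : (fun n => φ (Function.update Y α (V a b c (tseq n)))) = fun _ => φ Y := by
        funext n; exact (htseqS n).2.2
      rw [this]; exact tendsto_const_nhds
    exact tendsto_nhds_unique hconv' hconst
  -- claim : σ = s
  have hσs : σ = s := by
    by_contra hne
    have hσlt : σ < s := lt_of_le_of_ne hσub hne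
    set τ : ℕ → ℝ := fun n => σ + (s - σ)/((n:ℝ)+2) with hτdef
    have hτmem : ∀ n, σ < τ n ∧ τ n < s := fun n => shift_between hσlt n
    have hτ01 : ∀ n, 0 < τ n ∧ τ n < 1 :=
      fun n => ⟨lt_trans hσ0 (hτmem n).1, lt_trans (hτmem n).2 hs1⟩
    have hτlim : Filter.Tendsto τ Filter.atTop (nhds σ) := tendsto_shift σ (s - σ)
    have hconv : Filter.Tendsto (fun n => φ (Function.update Y α (V a b c (τ n))))
        Filter.atTop (nhds (φ Y)) := by
      have := cont_seq hC hab hac hbc hYσ α hYσl τ hτ01 hτlim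
      rw [hPσ] at this
      simpa [Function.update_idem] using this
    have hev1 : ∀ᶠ n in Filter.atTop, 0 < φ (Function.update Y α (V a b c (τ n))) β a :=
      (tendsto_entry hconv β a).eventually (eventually_gt_nhds hQβa)
    have hev2 : ∀ᶠ n in Filter.atTop, 0 < φ (Function.update Y α (V a b c (τ n))) β c :=
      (tendsto_entry hconv β c).eventually (eventually_gt_nhds hQβc)
    obtain ⟨n, hn1, hn2⟩ := (hev1.and hev2).exists
    have hWn : NoTiesProfile (Function.update Y α (V a b c (τ n))) :=
      update_preserves_noties hY α (V_noties hab hac hbc (hτ01 n).1 (hτ01 n).2)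
    -- block : α cannot hold b at the perturbed profile
    have hblock : φ (Function.update Y α (V a b c (τ n))) α b = 0 := by
      by_contra hne0
      have hpos : 0 < φ (Function.update Y α (V a b c (τ n))) α b :=
        lt_of_le_of_ne (entry_nonneg hB hWn α b) (Ne.symm hne0)
      exact tradeV hB hE hab hac hbc hWn (Ne.symm hαβ) (hτ01 n).1 (hτmem n).2 hs1
        (by rw [Function.update_of_ne (Ne.symm hαβ)]; exact hYβ)
        (Function.update_self ..) hn1 hn2 hpos
    -- freeze between τ n and σ
    have hfr := freeze hB hSP hNB hab hac hbc hY α (hτ01 n).1 (hτ01 n).2 hσ0 hσ1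
      (by rw [hblock, hPσ]; exact hQαb.symm)
    have hτS : τ n ∈ S := ⟨le_trans hσlb (le_of_lt (hτmem n).1), (hτmem n).2,
      by rw [hfr, hPσ]⟩
    have : τ n ≤ σ := le_csSup hSbdd hτS
    exact absurd this (not_le.mpr (hτmem n).1)
  -- final blow : perturb α's rate slightly above s
  rw [hσs] at hPσ
  set ρ : ℕ → ℝ := fun n => s + (1 - s)/((n:ℝ)+2) with hρdef
  have hρmem : ∀ n, s < ρ n ∧ ρ n < 1 := fun n => shift_between hs1 n
  have hρ01 : ∀ n, 0 < ρ n ∧ ρ n < 1 := fun n => ⟨lt_trans hs0 (hρmem n).1, (hρmem n).2⟩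
  have hρlim : Filter.Tendsto ρ Filter.atTop (nhds s) := tendsto_shift s (1 - s)
  have hnts : NoTies (V a b c s) := V_noties hab hac hbc hs0 hs1
  have hYs : NoTiesProfile (Function.update Y α (V a b c s)) :=
    update_preserves_noties hY α hnts
  have hconv : Filter.Tendsto (fun n => φ (Function.update Y α (V a b c (ρ n))))
      Filter.atTop (nhds (φ Y)) := by
    have := cont_seq hC hab hac hbc hYs α (Function.update_self ..) ρ hρ01 hρlim
    rw [hPσ] at this
    simpa [Function.update_idem] using this
  have hev1 : ∀ᶠ n in Filter.atTop, 0 < φ (Function.update Y α (V a b c (ρ n))) α a :=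
    (tendsto_entry hconv α a).eventually (eventually_gt_nhds hQαa)
  have hev2 : ∀ᶠ n in Filter.atTop, 0 < φ (Function.update Y α (V a b c (ρ n))) α c :=
    (tendsto_entry hconv α c).eventually (eventually_gt_nhds hQαc)
  have hev3 : ∀ᶠ n in Filter.atTop, 0 < φ (Function.update Y α (V a b c (ρ n))) β b :=
    (tendsto_entry hconv β b).eventually (eventually_gt_nhds hQβb)
  obtain ⟨n, hn1, hn2, hn3⟩ := (hev1.and (hev2.and hev3)).exists
  have hWn : NoTiesProfile (Function.update Y α (V a b c (ρ n))) :=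
    update_preserves_noties hY α (V_noties hab hac hbc (hρ01 n).1 (hρ01 n).2)
  exact tradeV hB hE hab hac hbc hWn hαβ hs0 (hρmem n).1 (hρ01 n).2
    (Function.update_self ..)
    (by rw [Function.update_of_ne (Ne.symm hαβ)]; exact hYβ)
    hn1 hn2 hn3

end Qref
section Core

lemma shift_between' {u v : ℝ} (huv : u < v) (n : ℕ) :
    u < v + (u-v)/((n:ℝ)+2) ∧ v + (u-v)/((n:ℝ)+2) < v := by
  have hn : (0:ℝ) < (n:ℝ) + 2 := by positivity
  have h2 : (2:ℝ) ≤ (n:ℝ) + 2 := by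
    have : (0:ℝ) ≤ (n:ℝ) := Nat.cast_nonneg n
    linarith
  have hkey : (v-u)/((n:ℝ)+2) ≤ (v-u)/2 := by
    apply div_le_div_of_nonneg_left (by linarith) (by norm_num) h2
  have hpos : 0 < (v-u)/((n:ℝ)+2) := div_pos (by linarith) hn
  have heq : (u-v)/((n:ℝ)+2) = -((v-u)/((n:ℝ)+2)) := by ring
  rw [heq]
  constructor <;> linarith

/-- b-share monotone in own reported rate -/
lemma Bmono {φ : (Fin 3 → Fin 3 → ℝ) → Fin 3 → Fin 3 → ℝ}
    (hB : BistochasticValued φ) (hSP : StrategyProof φ)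
    {a b c : Fin 3} (hab : a ≠ b) (hac : a ≠ c) (hbc : b ≠ c)
    {W : Fin 3 → Fin 3 → ℝ} (hW : NoTiesProfile W) (l : Fin 3)
    {u v : ℝ} (hu0 : 0 < u) (hu1 : u < 1) (hv0 : 0 < v) (hv1 : v < 1) (huv : u ≤ v) :
    φ (Function.update W l (V a b c u)) l b ≤ φ (Function.update W l (V a b c v)) l b := by
  rcases eq_or_lt_of_le huv with h | h
  · rw [h]
  · have hp := sp_pairVV hB hSP hab hac hbc hW l hu0 hu1 hv0 hv1
    unfold sc at hp
    nlinarith [hp.1, hp.2]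

set_option maxHeartbeats 2000000 in
/-- Core lemma: an agent α with lower rate p cannot hold both a and c
    while a same-ordered agent β with higher rate q holds b. -/
lemma core {φ : (Fin 3 → Fin 3 → ℝ) → Fin 3 → Fin 3 → ℝ}
    (hB : BistochasticValued φ) (hE : Efficient φ) (hSP : StrategyProof φ)
    (hNB : NonBossy φ) (hC : NCContinuous φ)
    {a b c : Fin 3} (hab : a ≠ b) (hac : a ≠ c) (hbc : b ≠ c)
    {W : Fin 3 → Fin 3 → ℝ} (hW : NoTiesProfile W) {α β : Fin 3} (hαβ : α ≠ β)
    {p q : ℝ} (hp0 : 0 < p) (hpq : p < q) (hq1 : q < 1)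
    (hWα : W α = V a b c p) (hWβ : W β = V a b c q)
    (hXa : 0 < φ W α a) (hXc : 0 < φ W α c) (hXb : 0 < φ W β b) : False := by
  have hq0 : 0 < q := lt_trans hp0 hpq
  have hp1 : p < 1 := lt_trans hpq hq1
  have hWq : Function.update W β (V a b c q) = W := by
    rw [← hWβ]; exact Function.update_eq_self β W
  -- claim 1 : on (p,q) the b-share of β is 0 or X β b
  have claim1 : ∀ s, p < s → s < q →
      φ (Function.update W β (V a b c s)) β b = 0 ∨
      φ (Function.update W β (V a b c s)) β b = φ W β b := by
    intro s hs1 hs2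
    have hs0 : 0 < s := lt_trans hp0 hs1
    have hs1' : s < 1 := lt_trans hs2 hq1
    have hWs : NoTiesProfile (Function.update W β (V a b c s)) :=
      update_preserves_noties hW β (V_noties hab hac hbc hs0 hs1')
    by_cases hΔ : φ (Function.update W β (V a b c s)) β b = φ W β b
    · right; exact hΔ
    left
    have hpair := sp_pairVV hB hSP hab hac hbc hW β hs0 hs1' hq0 hq1
    rw [hWq] at hpair
    obtain ⟨hp1', hp2'⟩ := hpair
    unfold sc at hp1' hp2'
    have hmono : φ (Function.update W β (V a b c s)) β b ≤ φ W β b := by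
      nlinarith [hp1', hp2']
    have hΔpos : φ (Function.update W β (V a b c s)) β b < φ W β b :=
      lt_of_le_of_ne hmono hΔ
    have hXa' : (0:ℝ) ≤ φ W β a := entry_nonneg hB hW β a
    have hXc' : (0:ℝ) ≤ φ W β c := entry_nonneg hB hW β c
    have hF2a : 0 < φ (Function.update W β (V a b c s)) β a := by nlinarith [hp2']
    have hF2c : 0 < φ (Function.update W β (V a b c s)) β c := by
      have r1 := row1 hB hab hac hbc hWs β
      have r2 := row1 hB hab hac hbc hW β
      nlinarith [hp1']
    have hF3 : φ (Function.update W β (V a b c s)) α b = 0 := by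
      by_contra hne0
      have hpos : 0 < φ (Function.update W β (V a b c s)) α b :=
        lt_of_le_of_ne (entry_nonneg hB hWs α b) (Ne.symm hne0)
      exact tradeV hB hE hab hac hbc hWs (Ne.symm hαβ) hp0 hs1 hs1'
        (Function.update_self ..)
        (by rw [Function.update_of_ne hαβ]; exact hWα)
        hF2a hF2c hpos
    obtain ⟨hF4a, hF4c⟩ := colforce hB hab hac hbc hWs hαβ hF3 hF2a hF2c
    by_contra hne0
    have hpos : 0 < φ (Function.update W β (V a b c s)) β b :=
      lt_of_le_of_ne (entry_nonneg hB hWs β b) (Ne.symm hne0)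
    exact Qref hB hE hSP hNB hC hab hac hbc hWs hαβ hp0 hs1 hs1'
      (by rw [Function.update_of_ne hαβ]; exact hWα)
      (Function.update_self ..)
      hF2a hF2c hF3 hF4a hF4c hpos
  -- dichotomy
  by_cases hall : ∀ s, p < s → s < q →
      φ (Function.update W β (V a b c s)) β b = φ W β b
  · -- frozen on (p,q) : matrix constantly X there
    have hfreeze : ∀ s, p < s → s < q → φ (Function.update W β (V a b c s)) = φ W := by
      intro s hs1 hs2
      have hs0 : 0 < s := lt_trans hp0 hs1
      have hs1' : s < 1 := lt_trans hs2 hq1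
      have hf := freeze hB hSP hNB hab hac hbc hW β hs0 hs1' hq0 hq1
        (by rw [hWq]; exact hall s hs1 hs2)
      rwa [hWq] at hf
    -- continuity of φ(update W β (V ·)) at p : value is X
    have hntp : NoTies (V a b c p) := V_noties hab hac hbc hp0 hp1
    have hWp : NoTiesProfile (Function.update W β (V a b c p)) :=
      update_preserves_noties hW β hntp
    have hWpβ : (Function.update W β (V a b c p)) β = V a b c p := Function.update_self ..
    have hPp : φ (Function.update W β (V a b c p)) = φ W := by
      have hτmem : ∀ n : ℕ, p < p + (q-p)/((n:ℝ)+2) ∧ p + (q-p)/((n:ℝ)+2) < q :=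
        fun n : ℕ => shift_between hpq n
      have hconv := cont_seq hC hab hac hbc hWp β hWpβ (fun n : ℕ => p + (q-p)/((n:ℝ)+2))
        (fun n : ℕ => ⟨lt_trans hp0 (hτmem n).1, lt_trans (hτmem n).2 hq1⟩)
        (tendsto_shift p (q-p))
      have hconv' : Filter.Tendsto
          (fun n : ℕ => φ (Function.update W β (V a b c (p + (q-p)/((n:ℝ)+2)))))
          Filter.atTop (nhds (φ (Function.update W β (V a b c p)))) := by
        simpa [Function.update_idem] using hconv
      have hconst : Filter.Tendsto
          (fun n : ℕ => φ (Function.update W β (V a b c (p + (q-p)/((n:ℝ)+2)))))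
          Filter.atTop (nhds (φ W)) := by
        have : (fun n : ℕ => φ (Function.update W β (V a b c (p + (q-p)/((n:ℝ)+2)))))
            = fun _ => φ W := by
          funext n; exact hfreeze _ (hτmem n).1 (hτmem n).2
        rw [this]; exact tendsto_const_nhds
      exact tendsto_nhds_unique hconv' hconst
    -- approach p from below and trade
    have hρmem : ∀ n : ℕ, 0 < p + (-p)/((n:ℝ)+2) ∧ p + (-p)/((n:ℝ)+2) < p :=
      fun n : ℕ => shift_below_mem p hp0 hp1 n
    have hconv2 : Filter.Tendsto
        (fun n : ℕ => φ (Function.update W β (V a b c (p + (-p)/((n:ℝ)+2)))))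
        Filter.atTop (nhds (φ W)) := by
      have := cont_seq hC hab hac hbc hWp β hWpβ (fun n : ℕ => p + (-p)/((n:ℝ)+2))
        (fun n : ℕ => ⟨(hρmem n).1, lt_trans (hρmem n).2 hp1⟩)
        (tendsto_shift p (-p))
      rw [hPp] at this
      simpa [Function.update_idem] using this
    have hev1 : ∀ᶠ (n : ℕ) in Filter.atTop,
        0 < φ (Function.update W β (V a b c (p + (-p)/((n:ℝ)+2)))) α a :=
      (tendsto_entry hconv2 α a).eventually (eventually_gt_nhds hXa)
    have hev2 : ∀ᶠ (n : ℕ) in Filter.atTop,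
        0 < φ (Function.update W β (V a b c (p + (-p)/((n:ℝ)+2)))) α c :=
      (tendsto_entry hconv2 α c).eventually (eventually_gt_nhds hXc)
    have hev3 : ∀ᶠ (n : ℕ) in Filter.atTop,
        0 < φ (Function.update W β (V a b c (p + (-p)/((n:ℝ)+2)))) β b :=
      (tendsto_entry hconv2 β b).eventually (eventually_gt_nhds hXb)
    obtain ⟨n, hn1, hn2, hn3⟩ := (hev1.and (hev2.and hev3)).exists
    have hWn : NoTiesProfile (Function.update W β (V a b c (p + (-p)/((n:ℝ)+2)))) :=
      update_preserves_noties hW β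
        (V_noties hab hac hbc (hρmem n).1 (lt_trans (hρmem n).2 hp1))
    exact tradeV hB hE hab hac hbc hWn hαβ (hρmem n).1 (hρmem n).2 hp1
      (by rw [Function.update_of_ne hαβ]; exact hWα)
      (Function.update_self ..)
      hn1 hn2 hn3
  · -- some zero value exists : then all of (p,q) is zero, contradiction at q
    push_neg at hall
    obtain ⟨s0, hs01, hs02, hs0ne⟩ := hall
    have hs00 : 0 < s0 := lt_trans hp0 hs01
    have hs01' : s0 < 1 := lt_trans hs02 hq1
    have hzero0 : φ (Function.update W β (V a b c s0)) β b = 0 :=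
      (claim1 s0 hs01 hs02).resolve_right hs0ne
    have hall0 : ∀ s, p < s → s < q → φ (Function.update W β (V a b c s)) β b = 0 := by
      intro s hs1 hs2
      have hs0' : 0 < s := lt_trans hp0 hs1
      have hs1'' : s < 1 := lt_trans hs2 hq1
      rcases claim1 s hs1 hs2 with h | h
      · exact h
      exfalso
      -- G s β b = X β b > 0 while G s0 β b = 0, monotone ⇒ s0 < s
      have hs0lt : s0 < s := by
        by_contra hle
        push_neg at hle
        have := Bmono hB hSP hab hac hbc hW β hs0' hs1'' hs00 hs01' hle
        rw [h, hzero0] at this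
        linarith
      -- sInf of the set where value is X β b on [s0, s]
      set S' : Set ℝ := {t | s0 ≤ t ∧ t ≤ s ∧ φ (Function.update W β (V a b c t)) β b = φ W β b}
        with hS'def
      have hsS' : s ∈ S' := ⟨le_of_lt hs0lt, le_refl s, h⟩
      have hS'ne : S'.Nonempty := ⟨s, hsS'⟩
      have hS'bdd : BddBelow S' := ⟨s0, fun t ht => ht.1⟩
      set σ' := sInf S' with hσ'def
      have hσ'lb : s0 ≤ σ' := le_csInf hS'ne (fun t ht => ht.1)
      have hσ'ub : σ' ≤ s := csInf_le hS'bdd hsS'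
      have hσ'0 : 0 < σ' := lt_of_lt_of_le hs00 hσ'lb
      have hσ'1 : σ' < 1 := lt_of_le_of_lt hσ'ub hs1''
      have hWσ' : NoTiesProfile (Function.update W β (V a b c σ')) :=
        update_preserves_noties hW β (V_noties hab hac hbc hσ'0 hσ'1)
      have hWσ'β : (Function.update W β (V a b c σ')) β = V a b c σ' := Function.update_self ..
      -- sequence in S' approaching σ' from above
      have hex : ∀ n : ℕ, ∃ t ∈ S', t < σ' + 1/((n:ℝ)+2) := by
        intro n
        apply exists_lt_of_csInf_lt hS'ne
        have : (0:ℝ) < 1/((n:ℝ)+2) := by positivity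
        linarith
      choose tseq htseqS htseqlt using hex
      have htge : ∀ n, σ' ≤ tseq n := fun n : ℕ => csInf_le hS'bdd (htseqS n)
      have htlim : Filter.Tendsto tseq Filter.atTop (nhds σ') := by
        have hup : Filter.Tendsto (fun n : ℕ => σ' + 1/((n:ℝ)+2)) Filter.atTop (nhds σ') :=
          tendsto_shift σ' 1
        apply tendsto_of_tendsto_of_tendsto_of_le_of_le tendsto_const_nhds hup htge
        intro n; exact le_of_lt (htseqlt n)
      have hGσ' : φ (Function.update W β (V a b c σ')) β b = φ W β b := by
        have hconv := cont_seq hC hab hac hbc hWσ' β hWσ'β tseq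
          (fun n : ℕ => ⟨lt_of_lt_of_le hs00 (htseqS n).1, lt_of_le_of_lt (htseqS n).2.1 hs1''⟩)
          htlim
        have hconv' : Filter.Tendsto (fun n : ℕ => φ (Function.update W β (V a b c (tseq n))) β b)
            Filter.atTop (nhds (φ (Function.update W β (V a b c σ')) β b)) := by
          have := tendsto_entry hconv β b
          simp only [Function.update_idem] at this
          exact this
        have hconst : Filter.Tendsto (fun n : ℕ => φ (Function.update W β (V a b c (tseq n))) β b)
            Filter.atTop (nhds (φ W β b)) := by
          have : (fun n : ℕ => φ (Function.update W β (V a b c (tseq n))) β b)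
              = fun _ => φ W β b := by
            funext n; exact (htseqS n).2.2
          rw [this]; exact tendsto_const_nhds
        exact tendsto_nhds_unique hconv' hconst
      have hσ'ne : s0 < σ' := by
        rcases eq_or_lt_of_le hσ'lb with h' | h'
        · exfalso; rw [← h'] at hGσ'; rw [hzero0] at hGσ'; linarith
        · exact h'
      -- approach σ' from below : values are 0
      have hrmem : ∀ n : ℕ, s0 < σ' + (s0 - σ')/((n:ℝ)+2) ∧ σ' + (s0 - σ')/((n:ℝ)+2) < σ' :=
        fun n : ℕ => shift_between' hσ'ne n
      have hrzero : ∀ n : ℕ, φ (Function.update W β (V a b c (σ' + (s0 - σ')/((n:ℝ)+2)))) β b = 0 := by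
        intro n
        have hmem := hrmem n
        have hin : p < σ' + (s0 - σ')/((n:ℝ)+2) := lt_trans hs01 hmem.1
        have hin2 : σ' + (s0 - σ')/((n:ℝ)+2) < q := lt_trans (lt_of_lt_of_le hmem.2 hσ'ub) hs2
        rcases claim1 _ hin hin2 with h' | h'
        · exact h'
        · exfalso
          -- t < σ' but value X β b : contradicts inf
          have : σ' + (s0 - σ')/((n:ℝ)+2) ∈ S' :=
            ⟨le_of_lt hmem.1, le_trans (le_of_lt hmem.2) hσ'ub, h'⟩
          have := csInf_le hS'bdd this
          linarith [hmem.2]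
      have hconv2 := cont_seq hC hab hac hbc hWσ' β hWσ'β
        (fun n : ℕ => σ' + (s0 - σ')/((n:ℝ)+2))
        (fun n : ℕ => ⟨lt_trans hs00 (hrmem n).1, lt_trans (hrmem n).2 hσ'1⟩)
        (tendsto_shift σ' (s0 - σ'))
      have hconv2' : Filter.Tendsto
          (fun n : ℕ => φ (Function.update W β (V a b c (σ' + (s0 - σ')/((n:ℝ)+2)))) β b)
          Filter.atTop (nhds (φ (Function.update W β (V a b c σ')) β b)) := by
        have := tendsto_entry hconv2 β b
        simp only [Function.update_idem] at this
        exact this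
      have hconst2 : Filter.Tendsto
          (fun n : ℕ => φ (Function.update W β (V a b c (σ' + (s0 - σ')/((n:ℝ)+2)))) β b)
          Filter.atTop (nhds 0) := by
        have : (fun n : ℕ => φ (Function.update W β (V a b c (σ' + (s0 - σ')/((n:ℝ)+2)))) β b)
            = fun _ => (0:ℝ) := by funext n; exact hrzero n
        rw [this]; exact tendsto_const_nhds
      have : φ (Function.update W β (V a b c σ')) β b = 0 :=
        tendsto_nhds_unique hconv2' hconst2
      rw [hGσ'] at this
      linarith
    -- all zero on (p,q) : approach q from below
    have hwmem : ∀ n : ℕ, p < q + (p - q)/((n:ℝ)+2) ∧ q + (p - q)/((n:ℝ)+2) < q :=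
      fun n : ℕ => shift_between' hpq n
    have hconv := cont_seq hC hab hac hbc hW β hWβ (fun n : ℕ => q + (p - q)/((n:ℝ)+2))
      (fun n : ℕ => ⟨lt_trans hp0 (hwmem n).1, lt_trans (hwmem n).2 hq1⟩)
      (tendsto_shift q (p - q))
    have hconv' : Filter.Tendsto
        (fun n : ℕ => φ (Function.update W β (V a b c (q + (p - q)/((n:ℝ)+2)))) β b)
        Filter.atTop (nhds (φ W β b)) := tendsto_entry hconv β b
    have hconst : Filter.Tendsto
        (fun n : ℕ => φ (Function.update W β (V a b c (q + (p - q)/((n:ℝ)+2)))) β b)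
        Filter.atTop (nhds 0) := by
      have : (fun n : ℕ => φ (Function.update W β (V a b c (q + (p - q)/((n:ℝ)+2)))) β b)
          = fun _ => (0:ℝ) := by
        funext n; exact hall0 _ (hwmem n).1 (hwmem n).2
      rw [this]; exact tendsto_const_nhds
    have : φ W β b = 0 := tendsto_nhds_unique hconv' hconst
    linarith

end Core
section Main

set_option maxHeartbeats 2000000 in
lemma main_half {φ : (Fin 3 → Fin 3 → ℝ) → Fin 3 → Fin 3 → ℝ}
    (hB : BistochasticValued φ) (hE : Efficient φ) (hSP : StrategyProof φ)
    (hNB : NonBossy φ) (hC : NCContinuous φ)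
    {u : Fin 3 → Fin 3 → ℝ} (hu : NoTiesProfile u)
    {i j : Fin 3} (hij : i ≠ j) (hord : SameOrder (u i) (u j))
    {a b c : Fin 3} (hab : a ≠ b) (hac : a ≠ c) (hbc : b ≠ c)
    (h1 : u i a > u i b) (h2 : u i b > u i c)
    (hpos : φ u i b + φ u j b > 0) :
    φ u i c = 0 ∨ φ u i a = 0 := by
  set p : ℝ := (u i b - u i c)/(u i a - u i c) with hpdef
  have hp0 : 0 < p := div_pos (by linarith) (by linarith)
  have hp1 : p < 1 := (div_lt_one (by linarith)).mpr (by linarith)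
  have hj1 : u j a > u j b := (hord a b).mp h1
  have hj2 : u j b > u j c := (hord b c).mp h2
  set q : ℝ := (u j b - u j c)/(u j a - u j c) with hqdef
  have hq0 : 0 < q := div_pos (by linarith) (by linarith)
  have hq1 : q < 1 := (div_lt_one (by linarith)).mpr (by linarith)
  -- canonicalize i then j
  have hcanon1 : φ (Function.update u i (V a b c p)) = φ u :=
    canon hB hSP hNB hC hab hac hbc hu i h1 h2
  set u1 := Function.update u i (V a b c p) with hu1def
  have hu1 : NoTiesProfile u1 :=
    update_preserves_noties hu i (V_noties hab hac hbc hp0 hp1)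
  have hu1j : u1 j = u j := Function.update_of_ne (Ne.symm hij) ..
  have hcanon2 : φ (Function.update u1 j (V a b c q)) = φ u1 := by
    have := canon hB hSP hNB hC hab hac hbc hu1 j
      (by rw [hu1j]; exact hj1) (by rw [hu1j]; exact hj2)
    rwa [hu1j] at this
  set u2 := Function.update u1 j (V a b c q) with hu2def
  have hu2 : NoTiesProfile u2 :=
    update_preserves_noties hu1 j (V_noties hab hac hbc hq0 hq1)
  have hphi : φ u2 = φ u := by rw [hcanon2, hcanon1]
  have hu2i : u2 i = V a b c p := by
    rw [hu2def, Function.update_of_ne hij, hu1def, Function.update_self]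
  have hu2j : u2 j = V a b c q := Function.update_self ..
  -- suppose badness
  by_contra hcon
  push_neg at hcon
  obtain ⟨hc0, ha0⟩ := hcon
  have hXa : 0 < φ u2 i a := by
    rw [hphi]; exact lt_of_le_of_ne ((hB u hu).1 i a) (Ne.symm ha0)
  have hXc : 0 < φ u2 i c := by
    rw [hphi]; exact lt_of_le_of_ne ((hB u hu).1 i c) (Ne.symm hc0)
  have hpos2 : 0 < φ u2 i b + φ u2 j b := by rw [hphi]; exact hpos
  rcases em (0 < φ u2 j b) with hjb | hjb
  · -- case : j holds b
    rcases lt_trichotomy p q with hpq | hpq | hpq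
    · exact core hB hE hSP hNB hC hab hac hbc hu2 hij hp0 hpq hq1 hu2i hu2j hXa hXc hjb
    · -- p = q sweep on j
      have hu2jp : u2 j = V a b c p := by rw [hu2j, hpq]
      have hWq' : Function.update u2 j (V a b c p) = u2 := by
        rw [← hu2jp]; exact Function.update_eq_self j u2
      have key : ∀ s, 0 < s → s < p → φ (Function.update u2 j (V a b c s)) j b = 0 := by
        intro s hs0 hsp
        have hs1 : s < 1 := lt_trans hsp hp1
        have hWs : NoTiesProfile (Function.update u2 j (V a b c s)) :=
          update_preserves_noties hu2 j (V_noties hab hac hbc hs0 hs1)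
        by_cases hΔ : φ (Function.update u2 j (V a b c s)) j b = φ u2 j b
        · exfalso
          have hf := freeze hB hSP hNB hab hac hbc hu2 j hs0 hs1 hp0 hp1
            (by rw [hWq']; exact hΔ)
          rw [hWq'] at hf
          exact tradeV hB hE hab hac hbc hWs hij hs0 hsp hp1
            (by rw [Function.update_of_ne hij]; exact hu2i)
            (Function.update_self ..)
            (by rw [hf]; exact hXa) (by rw [hf]; exact hXc) (by rw [hf]; exact hjb)
        have hpair := sp_pairVV hB hSP hab hac hbc hu2 j hs0 hs1 hp0 hp1
        rw [hWq'] at hpair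
        obtain ⟨hp1', hp2'⟩ := hpair
        unfold sc at hp1' hp2'
        have hmono : φ (Function.update u2 j (V a b c s)) j b ≤ φ u2 j b := by
          nlinarith [hp1', hp2']
        have hΔpos : φ (Function.update u2 j (V a b c s)) j b < φ u2 j b :=
          lt_of_le_of_ne hmono hΔ
        have hXa' : (0:ℝ) ≤ φ u2 j a := (hB u2 hu2).1 j a
        have hXc' : (0:ℝ) ≤ φ u2 j c := (hB u2 hu2).1 j c
        have hF2a : 0 < φ (Function.update u2 j (V a b c s)) j a := by nlinarith [hp2']
        have hF2c : 0 < φ (Function.update u2 j (V a b c s)) j c := by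
          have r1 := row1 hB hab hac hbc hWs j
          have r2 := row1 hB hab hac hbc hu2 j
          nlinarith [hp1']
        have hib0 : φ (Function.update u2 j (V a b c s)) i b = 0 := by
          by_contra hne0
          have hposib : 0 < φ (Function.update u2 j (V a b c s)) i b :=
            lt_of_le_of_ne ((hB _ hWs).1 i b) (Ne.symm hne0)
          exact core hB hE hSP hNB hC hab hac hbc hWs (Ne.symm hij) hs0 hsp hp1
            (Function.update_self ..)
            (by rw [Function.update_of_ne hij]; exact hu2i)
            hF2a hF2c hposib
        obtain ⟨hia', hic'⟩ := colforce hB hab hac hbc hWs hij hib0 hF2a hF2c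
        by_contra hne0
        have hposjb : 0 < φ (Function.update u2 j (V a b c s)) j b :=
          lt_of_le_of_ne ((hB _ hWs).1 j b) (Ne.symm hne0)
        exact tradeV hB hE hab hac hbc hWs hij hs0 hsp hp1
          (by rw [Function.update_of_ne hij]; exact hu2i)
          (Function.update_self ..) hia' hic' hposjb
      -- continuity below p
      have hρmem : ∀ n : ℕ, 0 < p + (-p)/((n:ℝ)+2) ∧ p + (-p)/((n:ℝ)+2) < p :=
        fun n => shift_below_mem p hp0 hp1 n
      have hconv := cont_seq hC hab hac hbc hu2 j hu2jp (fun n : ℕ => p + (-p)/((n:ℝ)+2))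
        (fun n => ⟨(hρmem n).1, lt_trans (hρmem n).2 hp1⟩) (tendsto_shift p (-p))
      have hconv' : Filter.Tendsto
          (fun n : ℕ => φ (Function.update u2 j (V a b c (p + (-p)/((n:ℝ)+2)))) j b)
          Filter.atTop (nhds (φ u2 j b)) := tendsto_entry hconv j b
      have hconst : Filter.Tendsto
          (fun n : ℕ => φ (Function.update u2 j (V a b c (p + (-p)/((n:ℝ)+2)))) j b)
          Filter.atTop (nhds 0) := by
        have : (fun n : ℕ => φ (Function.update u2 j (V a b c (p + (-p)/((n:ℝ)+2)))) j b)
            = fun _ => (0:ℝ) := by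
          funext n; exact key _ (hρmem n).1 (hρmem n).2
        rw [this]; exact tendsto_const_nhds
      have : φ u2 j b = 0 := tendsto_nhds_unique hconv' hconst
      linarith
    · exact tradeV hB hE hab hac hbc hu2 hij hq0 hpq hp1 hu2i hu2j hXa hXc hjb
  · -- case : j does not hold b, so i holds b
    have hjb0 : φ u2 j b = 0 := le_antisymm (not_lt.mp hjb) ((hB u2 hu2).1 j b)
    have hib : 0 < φ u2 i b := by linarith
    obtain ⟨hja, hjc⟩ := colforce hB hab hac hbc hu2 (Ne.symm hij) hjb0 hXa hXc
    rcases lt_trichotomy q p with hqp | hqp | hqp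
    · exact core hB hE hSP hNB hC hab hac hbc hu2 (Ne.symm hij) hq0 hqp hp1 hu2j hu2i hja hjc hib
    · -- q = p sweep on i
      have hWp' : Function.update u2 i (V a b c p) = u2 := by
        rw [← hu2i]; exact Function.update_eq_self i u2
      have hu2jq : u2 j = V a b c q := hu2j
      have key : ∀ t, 0 < t → t < p → φ (Function.update u2 i (V a b c t)) i b = 0 := by
        intro t ht0 htp
        have ht1 : t < 1 := lt_trans htp hp1
        have htq : t < q := by rw [hqp]; exact htp
        have hWt : NoTiesProfile (Function.update u2 i (V a b c t)) :=
          update_preserves_noties hu2 i (V_noties hab hac hbc ht0 ht1)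
        by_cases hΔ : φ (Function.update u2 i (V a b c t)) i b = φ u2 i b
        · exfalso
          have hf := freeze hB hSP hNB hab hac hbc hu2 i ht0 ht1 hp0 hp1
            (by rw [hWp']; exact hΔ)
          rw [hWp'] at hf
          exact tradeV hB hE hab hac hbc hWt (Ne.symm hij) ht0 htq hq1
            (by rw [Function.update_of_ne (Ne.symm hij)]; exact hu2j)
            (Function.update_self ..)
            (by rw [hf]; exact hja) (by rw [hf]; exact hjc) (by rw [hf]; exact hib)
        have hpair := sp_pairVV hB hSP hab hac hbc hu2 i ht0 ht1 hp0 hp1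
        rw [hWp'] at hpair
        obtain ⟨hp1', hp2'⟩ := hpair
        unfold sc at hp1' hp2'
        have hmono : φ (Function.update u2 i (V a b c t)) i b ≤ φ u2 i b := by
          nlinarith [hp1', hp2']
        have hΔpos : φ (Function.update u2 i (V a b c t)) i b < φ u2 i b :=
          lt_of_le_of_ne hmono hΔ
        have hXa' : (0:ℝ) ≤ φ u2 i a := (hB u2 hu2).1 i a
        have hXc' : (0:ℝ) ≤ φ u2 i c := (hB u2 hu2).1 i c
        have hF2a : 0 < φ (Function.update u2 i (V a b c t)) i a := by nlinarith [hp2']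
        have hF2c : 0 < φ (Function.update u2 i (V a b c t)) i c := by
          have r1 := row1 hB hab hac hbc hWt i
          have r2 := row1 hB hab hac hbc hu2 i
          nlinarith [hp1']
        have hjb2 : φ (Function.update u2 i (V a b c t)) j b = 0 := by
          by_contra hne0
          have hposjb : 0 < φ (Function.update u2 i (V a b c t)) j b :=
            lt_of_le_of_ne ((hB _ hWt).1 j b) (Ne.symm hne0)
          exact core hB hE hSP hNB hC hab hac hbc hWt hij ht0 htq hq1
            (Function.update_self ..)
            (by rw [Function.update_of_ne (Ne.symm hij)]; exact hu2j)
            hF2a hF2c hposjb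
        obtain ⟨hja', hjc'⟩ := colforce hB hab hac hbc hWt (Ne.symm hij) hjb2 hF2a hF2c
        by_contra hne0
        have hposib : 0 < φ (Function.update u2 i (V a b c t)) i b :=
          lt_of_le_of_ne ((hB _ hWt).1 i b) (Ne.symm hne0)
        exact tradeV hB hE hab hac hbc hWt (Ne.symm hij) ht0 htq hq1
          (by rw [Function.update_of_ne (Ne.symm hij)]; exact hu2j)
          (Function.update_self ..) hja' hjc' hposib
      -- continuity below p
      have hρmem : ∀ n : ℕ, 0 < p + (-p)/((n:ℝ)+2) ∧ p + (-p)/((n:ℝ)+2) < p :=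
        fun n => shift_below_mem p hp0 hp1 n
      have hconv := cont_seq hC hab hac hbc hu2 i hu2i (fun n : ℕ => p + (-p)/((n:ℝ)+2))
        (fun n => ⟨(hρmem n).1, lt_trans (hρmem n).2 hp1⟩) (tendsto_shift p (-p))
      have hconv' : Filter.Tendsto
          (fun n : ℕ => φ (Function.update u2 i (V a b c (p + (-p)/((n:ℝ)+2)))) i b)
          Filter.atTop (nhds (φ u2 i b)) := tendsto_entry hconv i b
      have hconst : Filter.Tendsto
          (fun n : ℕ => φ (Function.update u2 i (V a b c (p + (-p)/((n:ℝ)+2)))) i b)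
          Filter.atTop (nhds 0) := by
        have : (fun n : ℕ => φ (Function.update u2 i (V a b c (p + (-p)/((n:ℝ)+2)))) i b)
            = fun _ => (0:ℝ) := by
          funext n; exact key _ (hρmem n).1 (hρmem n).2
        rw [this]; exact tendsto_const_nhds
      have : φ u2 i b = 0 := tendsto_nhds_unique hconv' hconst
      linarith
    · exact tradeV hB hE hab hac hbc hu2 (Ne.symm hij) hp0 hqp hq1 hu2j hu2i hja hjc hib

end Main

theorem stmt7 (φ : (Fin 3 → Fin 3 → ℝ) → Fin 3 → Fin 3 → ℝ)
    (hB : BistochasticValued φ) (hE : Efficient φ) (hSP : StrategyProof φ)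
    (hNB : NonBossy φ) (hC : NCContinuous φ)
    (u : Fin 3 → Fin 3 → ℝ) (hu : NoTiesProfile u)
    (i j : Fin 3) (hij : i ≠ j) (hord : SameOrder (u i) (u j))
    (a b c : Fin 3) (hab : a ≠ b) (hac : a ≠ c) (hbc : b ≠ c)
    (h1 : u i a > u i b) (h2 : u i b > u i c)
    (hpos : φ u i b + φ u j b > 0) :
    (φ u i a + φ u i b = 1 ∨ φ u i b + φ u i c = 1) ∧
    (φ u j a + φ u j b = 1 ∨ φ u j b + φ u j c = 1) := by
  constructor
  · have hhalf := main_half hB hE hSP hNB hC hu hij hord hab hac hbc h1 h2 hpos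
    have hrow := row1 hB hab hac hbc hu i
    rcases hhalf with h | h
    · left; linarith
    · right; linarith
  · have h1' : u j a > u j b := (hord a b).mp h1
    have h2' : u j b > u j c := (hord b c).mp h2
    have hord' : SameOrder (u j) (u i) := fun x y => (hord x y).symm
    have hpos' : φ u j b + φ u i b > 0 := by linarith
    have hhalf := main_half hB hE hSP hNB hC hu (Ne.symm hij) hord' hab hac hbc h1' h2' hpos'
    have hrow := row1 hB hab hac hbc hu j
    rcases hhalf with h | h
    · left; linarith
    · right; linarith
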